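/- Let δ_j, j = 1,...,p with δ_j = 0 for j ∈ S_0 and δ_j ≠ 0 for j ∈ S_1 = {1,...,p}∖S_0. Let d_j^{(1)} ~ N(δ_j, σ²) and d_j^{(2)} ~ N(−δ_j, σ²), all 2p variables independent. If Σ_{j∈S_1} δ_j² > c_1·σ²·p^{1/2+ε} for constants c_1 > 0 and ε > 0, then Pr(Σ_{j=1}^p d_j^{(1)}·d_j^{(2)} < 0) ≥ 1 − 2·exp(−min{Σ_{j∈S_1}δ_j²/(4σ²), (Σ_{j∈S_1}δ_j²)²/(8pσ⁴)}). -/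

import Mathlib

open MeasureTheory ProbabilityTheory Real
open scoped NNReal

/-!
Chernoff bound. For independent `X ~ N(δ, v)` and `Y ~ N(-δ, v)`, integrating out `Y` and then
completing the square in `X` gives `E exp (t X Y) = (1 - (t v)²)^(-1/2) exp (-t δ² / (1 + t v))`,
and for `t v ≤ 1/2` the prefactor is at most `exp (2/3 (t v)²)`. Independence across coordinates
multiplies these moment generating functions, so Markov's inequality gives
`P (∑ d⁽¹⁾ d⁽²⁾ ≥ 0) ≤ exp (p · 2/3 (t v)² - t Δ / (1 + t v))` with `Δ = ∑ δ²`, and the choice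
`t v = min (1/2) (Δ / (2 p v))` makes this exponent at most `-min (Δ / (4 v)) (Δ² / (8 p v²))`.
-/

lemma inv_sqrt_one_sub_le_exp {x : ℝ} (hx₀ : 0 ≤ x) (hx : x ≤ 1 / 4) :
    (√(1 - x))⁻¹ ≤ rexp (2 / 3 * x) := by
  rw [← sqrt_inv, sqrt_le_iff]
  refine ⟨(exp_pos _).le, ?_⟩
  calc (1 - x)⁻¹ ≤ 4 / 3 * x + 1 := by
        rw [inv_le_iff_one_le_mul₀ (by linarith)]
        nlinarith
    _ ≤ rexp (4 / 3 * x) := add_one_le_exp _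
    _ = rexp (2 / 3 * x) ^ 2 := by rw [sq, ← exp_add]; ring_nf

lemma exists_unit_chernoff_exponent_le {r : ℝ} (hr : 0 ≤ r) :
    ∃ a ∈ Set.Icc (0 : ℝ) (1 / 2), 2 / 3 * a ^ 2 - a * r / (1 + a) ≤ -min (r / 4) (r ^ 2 / 8) := by
  rw [← max_neg_neg]
  rcases le_total r 1 with hr1 | hr1
  · refine ⟨r / 2, ⟨by positivity, by linarith⟩, le_max_of_le_right ?_⟩
    have : r ^ 2 / 3 ≤ r / 2 * r / (1 + r / 2) := by
      rw [le_div_iff₀ (by positivity)]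
      nlinarith
    nlinarith
  · refine ⟨1 / 2, ⟨by norm_num, le_rfl⟩, ?_⟩
    rcases le_total r 2 with hr2 | hr2
    · exact le_max_of_le_right (by norm_num; nlinarith)
    · exact le_max_of_le_left (by norm_num; linarith)

lemma exists_chernoff_exponent_le {n v Δ : ℝ} (hn : 0 < n) (hv : 0 < v) (hΔ : 0 ≤ Δ) :
    ∃ t, 0 ≤ t ∧ t * v ≤ 1 / 2 ∧
      n * (2 / 3 * (t * v) ^ 2) - t * Δ / (1 + t * v) ≤
        -min (Δ / (4 * v)) (Δ ^ 2 / (8 * n * v ^ 2)) := by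
  obtain ⟨a, ⟨ha₀, ha⟩, h⟩ := exists_unit_chernoff_exponent_le (r := Δ / (n * v)) (by positivity)
  refine ⟨a / v, by positivity, by rwa [div_mul_cancel₀ _ hv.ne'], ?_⟩
  rw [div_mul_cancel₀ _ hv.ne']
  have hscale : min (Δ / (4 * v)) (Δ ^ 2 / (8 * n * v ^ 2)) =
      n * min (Δ / (n * v) / 4) ((Δ / (n * v)) ^ 2 / 8) := by
    rw [mul_min_of_nonneg _ _ hn.le]
    congr 1 <;> field_simp
  rw [hscale]
  have : a / v * Δ / (1 + a) = n * (a * (Δ / (n * v)) / (1 + a)) := by field_simp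
  rw [this]
  linarith [mul_le_mul_of_nonneg_left h hn.le]

namespace ProbabilityTheory

theorem iIndepFun.prodMk_of_sumElim {Ω ι β : Type*} [MeasurableSpace Ω]
    [MeasurableSpace β] {μ : Measure Ω} [Fintype ι] {f g : ι → Ω → β}
    (hf : ∀ i, Measurable (f i)) (hg : ∀ i, Measurable (g i))
    (h : iIndepFun (Sum.elim f g) μ) :
    iIndepFun (fun i ω ↦ (f i ω, g i ω)) μ := by
  have := h.isProbabilityMeasure
  have hfg : ∀ k, Measurable (Sum.elim f g k) := by
    rintro (i | i)
    exacts [hf i, hg i]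
  rw [iIndepFun_iff_map_fun_eq_pi_map (fun i ↦ ((hf i).prodMk (hg i)).aemeasurable)]
  have hpair : ∀ i, μ.map (fun ω ↦ (f i ω, g i ω)) = (μ.map (f i)).prod (μ.map (g i)) :=
    fun i ↦ (indepFun_iff_map_prod_eq_prod_map_map (hf i).aemeasurable (hg i).aemeasurable).1
      (h.indepFun Sum.inl_ne_inr)
  have hsplit : (fun ω i ↦ (f i ω, g i ω)) = (MeasurableEquiv.arrowProdEquivProdArrow β β ι).symm ∘
      MeasurableEquiv.sumPiEquivProdPi (fun _ ↦ β) ∘ (fun ω k ↦ Sum.elim f g k ω) := rfl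
  simp_rw [hpair, hsplit]
  rw [← Measure.map_map (by fun_prop) (by fun_prop), ← Measure.map_map (by fun_prop) (by fun_prop),
    h.map_fun_eq_pi_map (fun k ↦ (hfg k).aemeasurable),
    (measurePreserving_sumPiEquivProdPi _).map_eq]
  exact (measurePreserving_arrowProdEquivProdArrow β β ι _ _).symm.map_eq

section GaussianQuadratic

variable {m b c : ℝ} {v : ℝ≥0}

lemma integrable_gaussianReal_iff (hv : v ≠ 0) {f : ℝ → ℝ} :
    Integrable f (gaussianReal m v) ↔ Integrable (fun x ↦ gaussianPDFReal m v x * f x) := by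
  rw [gaussianReal_of_var_ne_zero m hv, integrable_withDensity_iff_integrable_smul'
    (measurable_gaussianPDF m v) (ae_of_all _ fun _ ↦ gaussianPDF_lt_top)]
  simp [toReal_gaussianPDF]

lemma gaussianPDFReal_mul_exp_quadratic (hv : v ≠ 0) (hc : 2 * c * v < 1) (x : ℝ) :
    gaussianPDFReal m v x * rexp (b * x + c * x ^ 2) =
      (√(2 * π * v))⁻¹ * rexp ((2 * m * b + v * b ^ 2 + 2 * c * m ^ 2) / (2 * (1 - 2 * c * v))) *
        rexp (-((1 - 2 * c * v) / (2 * v)) * (x - (m + b * v) / (1 - 2 * c * v)) ^ 2) := by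
  have hv' : (v : ℝ) ≠ 0 := by exact_mod_cast hv
  have hD : 1 - 2 * c * v ≠ 0 := by linarith
  rw [gaussianPDFReal, mul_assoc, ← exp_add, mul_assoc _ (rexp _), ← exp_add]
  congr 2
  -- eliminating `c` turns `1 - 2 * c * v` into an atom that `field_simp` can clear
  generalize hD' : 1 - 2 * c * (v : ℝ) = D at hD ⊢
  obtain rfl : c = (1 - D) / (2 * v) := by rw [← hD']; field_simp; ring
  field_simp
  ring

lemma integrable_exp_quadratic_gaussianReal (hv : v ≠ 0) (hc : 2 * c * v < 1) :
    Integrable (fun x ↦ rexp (b * x + c * x ^ 2)) (gaussianReal m v) := by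
  have hq : 0 < (1 - 2 * c * v) / (2 * v) := by
    have : (0 : ℝ) < v := by positivity
    exact div_pos (by linarith) (by positivity)
  rw [integrable_gaussianReal_iff hv, funext (gaussianPDFReal_mul_exp_quadratic hv hc)]
  exact ((integrable_exp_neg_mul_sq hq).comp_sub_right _).const_mul _

lemma integral_exp_quadratic_gaussianReal (hv : v ≠ 0) (hc : 2 * c * v < 1) :
    ∫ x, rexp (b * x + c * x ^ 2) ∂gaussianReal m v =
      (√(1 - 2 * c * v))⁻¹ *
        rexp ((2 * m * b + v * b ^ 2 + 2 * c * m ^ 2) / (2 * (1 - 2 * c * v))) := by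
  have hv' : (0 : ℝ) < v := by positivity
  have hD : 0 < 1 - 2 * c * v := by linarith
  rw [integral_gaussianReal_eq_integral_smul hv]
  simp_rw [smul_eq_mul, gaussianPDFReal_mul_exp_quadratic hv hc]
  rw [integral_const_mul, integral_sub_right_eq_self (fun x ↦ rexp (-_ * x ^ 2)), integral_gaussian,
    div_div_eq_mul_div, sqrt_div' _ hD.le, show π * (2 * v) = 2 * π * v by ring]
  have : 0 < √(2 * π * v) := by positivity
  field_simp

end GaussianQuadratic

section ProductOfGaussians

variable {a b t : ℝ} {v₁ v₂ : ℝ≥0}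

lemma integral_exp_mul_mul_gaussianReal (x : ℝ) :
    ∫ y, rexp (t * (x * y)) ∂gaussianReal b v₂ = rexp (t * b * x + t ^ 2 * v₂ / 2 * x ^ 2) := by
  have h := congrFun (mgf_fun_id_gaussianReal (μ := b) (v := v₂)) (t * x)
  simp only [mgf, ← mul_assoc] at h ⊢
  rw [h]
  ring_nf

lemma integrable_exp_mul_mul_gaussianReal_prod (hv₁ : v₁ ≠ 0) (ht : t ^ 2 * v₁ * v₂ < 1) :
    Integrable (fun z : ℝ × ℝ ↦ rexp (t * (z.1 * z.2)))
      ((gaussianReal a v₁).prod (gaussianReal b v₂)) := by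
  have hc : 2 * (t ^ 2 * v₂ / 2) * v₁ < 1 := by linarith
  refine (integrable_prod_iff (by fun_prop)).2 ⟨ae_of_all _ fun x ↦ ?_, ?_⟩
  · simpa only [← mul_assoc] using integrable_exp_mul_gaussianReal (μ := b) (v := v₂) (t * x)
  · simp_rw [Real.norm_of_nonneg (exp_pos _).le, integral_exp_mul_mul_gaussianReal]
    exact integrable_exp_quadratic_gaussianReal hv₁ hc

lemma integral_exp_mul_mul_gaussianReal_prod (hv₁ : v₁ ≠ 0) (ht : t ^ 2 * v₁ * v₂ < 1) :
    ∫ z, rexp (t * (z.1 * z.2)) ∂((gaussianReal a v₁).prod (gaussianReal b v₂)) =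
      (√(1 - t ^ 2 * v₁ * v₂))⁻¹ *
        rexp (t * (2 * a * b + t * (v₂ * a ^ 2 + v₁ * b ^ 2)) / (2 * (1 - t ^ 2 * v₁ * v₂))) := by
  have hc : 2 * (t ^ 2 * v₂ / 2) * v₁ < 1 := by linarith
  rw [integral_prod _ (integrable_exp_mul_mul_gaussianReal_prod hv₁ ht)]
  simp_rw [integral_exp_mul_mul_gaussianReal]
  rw [integral_exp_quadratic_gaussianReal hv₁ hc]
  congr 2 <;> ring_nf

end ProductOfGaussians

section RandomVariables

variable {Ω : Type*} [MeasurableSpace Ω] {P : Measure Ω} [IsProbabilityMeasure P] {X Y : Ω → ℝ}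
  {a b t : ℝ} {v₁ v₂ : ℝ≥0}

lemma IndepFun.map_prodMk_eq_gaussianReal_prod (hX : Measurable X) (hY : Measurable Y)
    (hXY : IndepFun X Y P) (hlX : P.map X = gaussianReal a v₁) (hlY : P.map Y = gaussianReal b v₂) :
    P.map (fun ω ↦ (X ω, Y ω)) = (gaussianReal a v₁).prod (gaussianReal b v₂) := by
  rw [← hlX, ← hlY]
  exact (indepFun_iff_map_prod_eq_prod_map_map hX.aemeasurable hY.aemeasurable).1 hXY

lemma IndepFun.integrable_exp_mul_mul_of_gaussianReal (hX : Measurable X) (hY : Measurable Y)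
    (hXY : IndepFun X Y P) (hlX : P.map X = gaussianReal a v₁) (hlY : P.map Y = gaussianReal b v₂)
    (hv₁ : v₁ ≠ 0) (ht : t ^ 2 * v₁ * v₂ < 1) :
    Integrable (fun ω ↦ rexp (t * (X ω * Y ω))) P := by
  have h := integrable_exp_mul_mul_gaussianReal_prod (a := a) (b := b) hv₁ ht
  rw [← hXY.map_prodMk_eq_gaussianReal_prod hX hY hlX hlY,
    integrable_map_measure (by fun_prop) (by fun_prop)] at h
  exact h

lemma IndepFun.mgf_mul_of_gaussianReal (hX : Measurable X) (hY : Measurable Y)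
    (hXY : IndepFun X Y P) (hlX : P.map X = gaussianReal a v₁) (hlY : P.map Y = gaussianReal b v₂)
    (hv₁ : v₁ ≠ 0) (ht : t ^ 2 * v₁ * v₂ < 1) :
    mgf (X * Y) P t = (√(1 - t ^ 2 * v₁ * v₂))⁻¹ *
      rexp (t * (2 * a * b + t * (v₂ * a ^ 2 + v₁ * b ^ 2)) / (2 * (1 - t ^ 2 * v₁ * v₂))) := by
  rw [← integral_exp_mul_mul_gaussianReal_prod hv₁ ht,
    ← hXY.map_prodMk_eq_gaussianReal_prod hX hY hlX hlY,
    integral_map (by fun_prop) (by fun_prop)]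
  rfl

lemma IndepFun.mgf_mul_le_of_gaussianReal_neg {δ : ℝ} {v : ℝ≥0} (hX : Measurable X)
    (hY : Measurable Y) (hXY : IndepFun X Y P) (hlX : P.map X = gaussianReal δ v)
    (hlY : P.map Y = gaussianReal (-δ) v) (hv : v ≠ 0) (ht : 0 ≤ t) (htv : t * v ≤ 1 / 2) :
    mgf (X * Y) P t ≤ rexp (2 / 3 * (t * v) ^ 2 - t * δ ^ 2 / (1 + t * v)) := by
  have htv₀ : 0 ≤ t * v := by positivity
  have hsq : t ^ 2 * v * v = (t * v) ^ 2 := by ring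
  rw [hXY.mgf_mul_of_gaussianReal hX hY hlX hlY hv (by nlinarith), hsq, exp_sub]
  have hexp : t * (2 * δ * -δ + t * (v * δ ^ 2 + v * (-δ) ^ 2)) / (2 * (1 - (t * v) ^ 2)) =
      -(t * δ ^ 2 / (1 + t * v)) := by
    have : 1 - t * v ≠ 0 := by linarith
    rw [show 1 - (t * v : ℝ) ^ 2 = (1 - t * v) * (1 + t * v) by ring]
    field_simp
    ring
  rw [hexp, exp_neg, ← div_eq_mul_inv]
  gcongr
  exact inv_sqrt_one_sub_le_exp (by positivity) (by nlinarith)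

end RandomVariables

section Tail

variable {Ω ι : Type*} [MeasurableSpace Ω] {P : Measure Ω} [IsProbabilityMeasure P] [Fintype ι]
  {d₁ d₂ : ι → Ω → ℝ} {δ : ι → ℝ} {v : ℝ≥0} {t : ℝ}

theorem measureReal_sum_mul_nonneg_le (hm₁ : ∀ j, Measurable (d₁ j))
    (hm₂ : ∀ j, Measurable (d₂ j)) (hindep : iIndepFun (Sum.elim d₁ d₂) P)
    (hd₁ : ∀ j, P.map (d₁ j) = gaussianReal (δ j) v)
    (hd₂ : ∀ j, P.map (d₂ j) = gaussianReal (-δ j) v)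
    (hv : v ≠ 0) (ht : 0 ≤ t) (htv : t * v ≤ 1 / 2) :
    P.real {ω | 0 ≤ ∑ j, d₁ j ω * d₂ j ω} ≤
      rexp (Fintype.card ι * (2 / 3 * (t * v) ^ 2) - t * (∑ j, δ j ^ 2) / (1 + t * v)) := by
  have hprod : iIndepFun (fun j ↦ d₁ j * d₂ j) P :=
    (hindep.prodMk_of_sumElim hm₁ hm₂).comp (fun _ z ↦ z.1 * z.2) fun _ ↦ by fun_prop
  have hpair : ∀ j, IndepFun (d₁ j) (d₂ j) P := fun j ↦ hindep.indepFun Sum.inl_ne_inr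
  have hint : ∀ j, Integrable (fun ω ↦ rexp (t * (d₁ j * d₂ j) ω)) P := fun j ↦
    (hpair j).integrable_exp_mul_mul_of_gaussianReal (hm₁ j) (hm₂ j) (hd₁ j) (hd₂ j) hv
      (by nlinarith [mul_nonneg ht v.coe_nonneg])
  have hmeas : ∀ j, Measurable (d₁ j * d₂ j) := fun j ↦ (hm₁ j).mul (hm₂ j)
  calc P.real {ω | 0 ≤ ∑ j, d₁ j ω * d₂ j ω}
      ≤ rexp (-t * 0) * mgf (∑ j, d₁ j * d₂ j) P t := by
        simpa only [Finset.sum_apply, Pi.mul_apply] using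
          measure_ge_le_exp_mul_mgf 0 ht (hprod.integrable_exp_mul_sum hmeas fun j _ ↦ hint j)
    _ = ∏ j, mgf (d₁ j * d₂ j) P t := by rw [hprod.mgf_sum hmeas]; simp
    _ ≤ ∏ j, rexp (2 / 3 * (t * v) ^ 2 - t * δ j ^ 2 / (1 + t * v)) :=
        Finset.prod_le_prod (fun _ _ ↦ mgf_nonneg) fun j _ ↦
          (hpair j).mgf_mul_le_of_gaussianReal_neg (hm₁ j) (hm₂ j) (hd₁ j) (hd₂ j) hv ht htv
    _ = rexp (Fintype.card ι * (2 / 3 * (t * v) ^ 2) - t * (∑ j, δ j ^ 2) / (1 + t * v)) := by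
        rw [← exp_sum, Finset.sum_sub_distrib, Finset.sum_const, Finset.card_univ, nsmul_eq_mul,
          Finset.mul_sum, Finset.sum_div]

end Tail

end ProbabilityTheory

theorem label_switching_sign_detection_general
    {Ω : Type*} [MeasurableSpace Ω] (P : Measure Ω) [IsProbabilityMeasure P]
    (p : ℕ) (hp : 0 < p) (σ : ℝ) (hσ : 0 < σ)
    (δ : Fin p → ℝ) (S₁ : Finset (Fin p))
    (d₁ d₂ : Fin p → Ω → ℝ)
    (hm₁ : ∀ j, Measurable (d₁ j)) (hm₂ : ∀ j, Measurable (d₂ j))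
    (hindep : iIndepFun (Sum.elim d₁ d₂) P)
    (hd₁ : ∀ j, P.map (d₁ j) = gaussianReal (δ j) ⟨σ ^ 2, sq_nonneg σ⟩)
    (hd₂ : ∀ j, P.map (d₂ j) = gaussianReal (-δ j) ⟨σ ^ 2, sq_nonneg σ⟩) :
    (P {ω | ∑ j, d₁ j ω * d₂ j ω < 0}).toReal ≥
      1 - 2 * Real.exp (-min ((∑ j ∈ S₁, δ j ^ 2) / (4 * σ ^ 2))
        ((∑ j ∈ S₁, δ j ^ 2) ^ 2 / (8 * p * σ ^ 4))) := by
  set Δ := ∑ j ∈ S₁, δ j ^ 2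
  have hσ2 : 0 < σ ^ 2 := by positivity
  obtain ⟨t, ht, htv, hexp⟩ :=
    exists_chernoff_exponent_le (n := p) (Δ := Δ) (by exact_mod_cast hp) hσ2 (by positivity)
  set v : ℝ≥0 := ⟨σ ^ 2, sq_nonneg σ⟩
  have hvσ : (v : ℝ) = σ ^ 2 := rfl
  have htail := measureReal_sum_mul_nonneg_le hm₁ hm₂ hindep hd₁ hd₂
    (fun h ↦ hσ2.ne' (congrArg NNReal.toReal h)) ht (hvσ ▸ htv)
  rw [Fintype.card_fin, hvσ] at htail
  have hΔ : t * Δ / (1 + t * σ ^ 2) ≤ t * (∑ j, δ j ^ 2) / (1 + t * σ ^ 2) := by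
    gcongr
    exact Finset.sum_le_sum_of_subset_of_nonneg (Finset.subset_univ _) fun _ _ _ ↦ sq_nonneg _
  have hcompl : P.real {ω | ∑ j, d₁ j ω * d₂ j ω < 0} =
      1 - P.real {ω | 0 ≤ ∑ j, d₁ j ω * d₂ j ω} := by
    rw [← probReal_compl_eq_one_sub (measurableSet_le measurable_const (by fun_prop))]
    simp only [Set.compl_ofPred, not_le]
  have hexponent : p * (2 / 3 * (t * σ ^ 2) ^ 2) - t * (∑ j, δ j ^ 2) / (1 + t * σ ^ 2) ≤
      -min (Δ / (4 * σ ^ 2)) (Δ ^ 2 / (8 * p * σ ^ 4)) := by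
    rw [show σ ^ 4 = (σ ^ 2) ^ 2 by ring]
    linarith
  rw [ge_iff_le, ← measureReal_def, hcompl]
  linarith [exp_le_exp.2 hexponent, exp_pos (-min (Δ / (4 * σ ^ 2)) (Δ ^ 2 / (8 * p * σ ^ 4)))]

/-- Label-switching detection: with independent `d_j^{(1)} ~ N(δ_j, σ²)` and
`d_j^{(2)} ~ N(−δ_j, σ²)`, if `Σ_{j∈S₁} δ_j² > c₁ σ² p^{1/2+ε}` then
`Σ_j d_j^{(1)} d_j^{(2)} < 0` with high probability. -/
theorem label_switching_sign_detection
    {Ω : Type*} [MeasurableSpace Ω] (P : Measure Ω) [IsProbabilityMeasure P]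
    (p : ℕ) (hp : 0 < p) (σ : ℝ) (hσ : 0 < σ)
    (δ : Fin p → ℝ) (S₀ S₁ : Finset (Fin p)) (hS₁ : S₁ = S₀ᶜ)
    (hδ₀ : ∀ j ∈ S₀, δ j = 0) (hδ₁ : ∀ j ∈ S₁, δ j ≠ 0)
    (d₁ d₂ : Fin p → Ω → ℝ)
    (hm₁ : ∀ j, Measurable (d₁ j)) (hm₂ : ∀ j, Measurable (d₂ j))
    (hindep : iIndepFun (Sum.elim d₁ d₂) P)
    (hd₁ : ∀ j, P.map (d₁ j) = gaussianReal (δ j) ⟨σ ^ 2, sq_nonneg σ⟩)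
    (hd₂ : ∀ j, P.map (d₂ j) = gaussianReal (-δ j) ⟨σ ^ 2, sq_nonneg σ⟩)
    (c₁ ε : ℝ) (hc₁ : 0 < c₁) (hε : 0 < ε)
    (hsignal : ∑ j ∈ S₁, δ j ^ 2 > c₁ * σ ^ 2 * (p : ℝ) ^ ((1 : ℝ) / 2 + ε)) :
    (P {ω | ∑ j, d₁ j ω * d₂ j ω < 0}).toReal ≥
      1 - 2 * Real.exp (-min ((∑ j ∈ S₁, δ j ^ 2) / (4 * σ ^ 2))
        ((∑ j ∈ S₁, δ j ^ 2) ^ 2 / (8 * p * σ ^ 4))) :=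
  label_switching_sign_detection_general P p hp σ hσ δ S₁ d₁ d₂ hm₁ hm₂ hindep hd₁ hd₂
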